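/- arXiv:1503.04769 — 5 statements merged into one kernel-verified Lean document; each statement's English description precedes it below -/
import Mathlib

section
/- Consider the two-port circuit equations P₁ = g·V₁(V₁ - V₂), P₂ = g·V₂(V₂ - V₁) with conductance g > 0. Suppose P₁ > P₂ and 0 < P₁ + P₂ < P₁ - P₂. Then, setting V₀ := (P₁ - P₂)/(2√(g(P₁ + P₂))) and x := (P₁ + P₂)/(P₁ - P₂), one has 0 < x < 1, and the voltages V₁ := V₀(1 + x), V₂ := V₀(1 - x) satisfy the circuit equations with V₁ > V₂ > 0. -/
/-!
Write `p = P₁ + P₂` for the loss and `q = P₁ - P₂` for the transferred power. Adding and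
subtracting the two circuit equations turns them into `p = g (V₁ - V₂)²` and
`q = g (V₁ - V₂)(V₁ + V₂)`. The proposed voltages have `V₁ + V₂ = 2 V₀` and
`V₁ - V₂ = 2 V₀ x`, and `V₀` is chosen so that `4 g V₀² p = q²`; with `x = p / q` both
equations then reduce to this single identity.
-/

section Field

variable {K : Type*} [Field K]

theorem twoPort_eqs_of_loss_transfer [CharZero K] {g P₁ P₂ V₁ V₂ : K}
    (hloss : P₁ + P₂ = g * (V₁ - V₂) ^ 2)
    (htransfer : P₁ - P₂ = g * (V₁ - V₂) * (V₁ + V₂)) :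
    P₁ = g * V₁ * (V₁ - V₂) ∧ P₂ = g * V₂ * (V₂ - V₁) :=
  ⟨by linear_combination (hloss + htransfer) / 2,
    by linear_combination (hloss - htransfer) / 2⟩

theorem loss_transfer_of_sq_eq {g P₁ P₂ V₀ x : K} (hq : P₁ - P₂ ≠ 0)
    (hV₀ : 4 * V₀ ^ 2 * (g * (P₁ + P₂)) = (P₁ - P₂) ^ 2) (hx : x = (P₁ + P₂) / (P₁ - P₂)) :
    P₁ + P₂ = g * (V₀ * (1 + x) - V₀ * (1 - x)) ^ 2 ∧
      P₁ - P₂ = g * (V₀ * (1 + x) - V₀ * (1 - x)) * (V₀ * (1 + x) + V₀ * (1 - x)) := by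
  subst hx
  constructor
  · field_simp
    linear_combination -(P₁ + P₂) * hV₀
  · field_simp
    linear_combination -(P₁ - P₂) * hV₀

end Field

theorem four_mul_div_two_mul_sqrt_sq_mul {b c : ℝ} (hc : 0 < c) :
    4 * (b / (2 * √c)) ^ 2 * c = b ^ 2 := by
  have hsqrt : √c ≠ 0 := (Real.sqrt_pos.mpr hc).ne'
  rw [div_pow, mul_pow, Real.sq_sqrt hc.le]
  field_simp
  ring

theorem two_port_operating_point_exists_general
    (g P₁ P₂ : ℝ) (hg : 0 < g)
    (hpos : 0 < P₁ + P₂) (hlt : P₁ + P₂ < P₁ - P₂)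
    (V₀ x V₁ V₂ : ℝ)
    (hV₀ : V₀ = (P₁ - P₂) / (2 * Real.sqrt (g * (P₁ + P₂))))
    (hx : x = (P₁ + P₂) / (P₁ - P₂))
    (hV₁ : V₁ = V₀ * (1 + x)) (hV₂ : V₂ = V₀ * (1 - x)) :
    0 < x ∧ x < 1 ∧
    P₁ = g * V₁ * (V₁ - V₂) ∧ P₂ = g * V₂ * (V₂ - V₁) ∧
    V₂ < V₁ ∧ 0 < V₂ := by
  have hq : 0 < P₁ - P₂ := hpos.trans hlt
  have hx₀ : 0 < x := hx ▸ div_pos hpos hq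
  have hx₁ : x < 1 := hx ▸ (div_lt_one hq).mpr hlt
  have hV₀pos : 0 < V₀ := by rw [hV₀]; positivity
  have hV₀sq : 4 * V₀ ^ 2 * (g * (P₁ + P₂)) = (P₁ - P₂) ^ 2 :=
    hV₀ ▸ four_mul_div_two_mul_sqrt_sq_mul (mul_pos hg hpos)
  obtain ⟨hloss, htransfer⟩ := loss_transfer_of_sq_eq hq.ne' hV₀sq hx
  rw [← hV₁, ← hV₂] at hloss htransfer
  obtain ⟨hP₁, hP₂⟩ := twoPort_eqs_of_loss_transfer hloss htransfer
  refine ⟨hx₀, hx₁, hP₁, hP₂, ?_, ?_⟩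
  · rw [hV₁, hV₂]
    linarith [mul_pos hV₀pos hx₀]
  · rw [hV₂]
    exact mul_pos hV₀pos (sub_pos.mpr hx₁)

/-- For the two-port circuit with conductance `g > 0`, if `P₁ > P₂` and
`0 < P₁ + P₂ < P₁ - P₂`, then with `V₀ = (P₁-P₂)/(2√(g(P₁+P₂)))` and
`x = (P₁+P₂)/(P₁-P₂)` one has `0 < x < 1`, and the voltages `V₁ = V₀(1+x)`,
`V₂ = V₀(1-x)` satisfy the circuit equations with `V₁ > V₂ > 0`. -/
theorem two_port_operating_point_exists
    (g P₁ P₂ : ℝ) (hg : 0 < g)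
    (h12 : P₂ < P₁)
    (hpos : 0 < P₁ + P₂) (hlt : P₁ + P₂ < P₁ - P₂)
    (V₀ x V₁ V₂ : ℝ)
    (hV₀ : V₀ = (P₁ - P₂) / (2 * Real.sqrt (g * (P₁ + P₂))))
    (hx : x = (P₁ + P₂) / (P₁ - P₂))
    (hV₁ : V₁ = V₀ * (1 + x)) (hV₂ : V₂ = V₀ * (1 - x)) :
    0 < x ∧ x < 1 ∧
    P₁ = g * V₁ * (V₁ - V₂) ∧ P₂ = g * V₂ * (V₂ - V₁) ∧
    V₂ < V₁ ∧ 0 < V₂ :=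
  two_port_operating_point_exists_general g P₁ P₂ hg hpos hlt V₀ x V₁ V₂ hV₀ hx hV₁ hV₂
end

section
/- Consider the two-port circuit equations P₁ = g·V₁(V₁ - V₂), P₂ = g·V₂(V₂ - V₁) with conductance g > 0. If V₁ > 0, V₂ > 0 and V₁ ≠ V₂, then the injected powers satisfy 0 < P₁ + P₂ < |P₁ - P₂|, i.e., the ratio (P₁ + P₂)/|P₁ - P₂| lies in the open interval (0,1). -/
/-! The loss is `P₁ + P₂ = g (V₁ - V₂)²` and the transfer is `P₁ - P₂ = g (V₁ - V₂) (V₁ + V₂)`,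
so `(P₁ + P₂) / |P₁ - P₂| = |V₁ - V₂| / (V₁ + V₂)`, which lies in `(0, 1)` for distinct positive
voltages. -/

theorem abs_sub_lt_add_of_pos {α : Type*} [AddCommGroup α] [LinearOrder α] [IsOrderedAddMonoid α]
    {a b : α} (ha : 0 < a) (hb : 0 < b) : |a - b| < a + b :=
  abs_sub_lt_iff.mpr
    ⟨(sub_lt_self a hb).trans (lt_add_of_pos_right a hb),
      (sub_lt_self b ha).trans (lt_add_of_pos_left b ha)⟩

namespace TwoPort

section CommRing

variable {R : Type*} [CommRing R] (g V₁ V₂ : R)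

theorem loss_eq : g * V₁ * (V₁ - V₂) + g * V₂ * (V₂ - V₁) = g * (V₁ - V₂) ^ 2 := by ring

theorem transfer_eq :
    g * V₁ * (V₁ - V₂) - g * V₂ * (V₂ - V₁) = g * (V₁ - V₂) * (V₁ + V₂) := by ring

end CommRing

section LinearOrderedRing

variable {R : Type*} [CommRing R] [LinearOrder R] [IsStrictOrderedRing R] {g V₁ V₂ : R}

theorem loss_pos (hg : 0 < g) (hne : V₁ ≠ V₂) : 0 < g * (V₁ - V₂) ^ 2 :=
  mul_pos hg (sq_pos_of_ne_zero (sub_ne_zero.mpr hne))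

theorem loss_lt_abs_transfer (hg : 0 < g) (hV₁ : 0 < V₁) (hV₂ : 0 < V₂)
    (hne : V₁ ≠ V₂) : g * (V₁ - V₂) ^ 2 < |g * (V₁ - V₂) * (V₁ + V₂)| := by
  have hd : 0 < g * |V₁ - V₂| := mul_pos hg (abs_pos.mpr (sub_ne_zero.mpr hne))
  calc g * (V₁ - V₂) ^ 2 = g * |V₁ - V₂| * |V₁ - V₂| := by rw [mul_assoc, ← sq_abs, sq]
    _ < g * |V₁ - V₂| * (V₁ + V₂) := mul_lt_mul_of_pos_left (abs_sub_lt_add_of_pos hV₁ hV₂) hd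
    _ = |g * (V₁ - V₂) * (V₁ + V₂)| := by
      rw [abs_mul, abs_mul, abs_of_pos hg, abs_of_pos (add_pos hV₁ hV₂)]

end LinearOrderedRing

end TwoPort

/-- For the two-port circuit with conductance `g > 0`, any solution with
`V₁ > 0`, `V₂ > 0` and `V₁ ≠ V₂` satisfies `0 < P₁ + P₂ < |P₁ - P₂|`. -/
theorem two_port_power_ratio_in_unit_interval
    (g P₁ P₂ V₁ V₂ : ℝ) (hg : 0 < g)
    (h1 : P₁ = g * V₁ * (V₁ - V₂))
    (h2 : P₂ = g * V₂ * (V₂ - V₁))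
    (hV₁ : 0 < V₁) (hV₂ : 0 < V₂) (hne : V₁ ≠ V₂) :
    0 < P₁ + P₂ ∧ P₁ + P₂ < |P₁ - P₂| := by
  subst h1 h2
  rw [TwoPort.loss_eq, TwoPort.transfer_eq]
  exact ⟨TwoPort.loss_pos hg hne, TwoPort.loss_lt_abs_transfer hg hV₁ hV₂ hne⟩
end

section
/- Consider the two-port circuit equations P₁ = g·V₁(V₁ - V₂), P₂ = g·V₂(V₂ - V₁) with conductance g > 0, and suppose P₁ > P₂ and 0 < P₁ + P₂ < P₁ - P₂. Then the circuit has a unique solution with V₁ > 0 and V₂ > 0, namely V₁ = V₀(1 + x) and V₂ = V₀(1 - x) where V₀ = (P₁ - P₂)/(2√(g(P₁ + P₂))) and x = (P₁ + P₂)/(P₁ - P₂). -/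
/-!
Adding the two equations gives `P₁ + P₂ = g (V₁ - V₂)²`, and `P₁ = V₁ · g (V₁ - V₂)` with
`V₁, P₁ > 0` singles out the positive root: `g (V₁ - V₂) = √(g (P₁ + P₂))`. Dividing each
equation by this root gives `V₁ = P₁ / √(g (P₁ + P₂))` and `V₂ = -P₂ / √(g (P₁ + P₂))`, which are
`V₀ (1 + x)` and `V₀ (1 - x)`; both are positive because `P₂ < 0 < P₁`.
-/

section ParameterForm

variable {K : Type*} [Field K] [NeZero (2 : K)] {P₁ P₂ : K}

lemma sub_div_two_mul_mul_one_add (hP : P₁ ≠ P₂) (r : K) :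
    (P₁ - P₂) / (2 * r) * (1 + (P₁ + P₂) / (P₁ - P₂)) = P₁ / r := by
  have hP' : P₁ - P₂ ≠ 0 := sub_ne_zero.2 hP
  field_simp
  ring

lemma sub_div_two_mul_mul_one_sub (hP : P₁ ≠ P₂) (r : K) :
    (P₁ - P₂) / (2 * r) * (1 - (P₁ + P₂) / (P₁ - P₂)) = -P₂ / r := by
  have hP' : P₁ - P₂ ≠ 0 := sub_ne_zero.2 hP
  field_simp
  ring

end ParameterForm

section TwoPort

variable {g P₁ P₂ V₁ V₂ : ℝ}

lemma mul_sub_eq_sqrt_of_twoPort (hV₁ : 0 < V₁) (hP₁ : 0 < P₁)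
    (h₁ : P₁ = g * V₁ * (V₁ - V₂)) (h₂ : P₂ = g * V₂ * (V₂ - V₁)) :
    g * (V₁ - V₂) = √(g * (P₁ + P₂)) := by
  have hsq : g * (P₁ + P₂) = (g * (V₁ - V₂)) ^ 2 := by linear_combination g * (h₁ + h₂)
  have hpos : 0 < g * (V₁ - V₂) := pos_of_mul_pos_right (a := V₁) (by linarith) hV₁.le
  rw [hsq, Real.sqrt_sq hpos.le]

lemma voltages_eq_div_sqrt_of_twoPort (hV₁ : 0 < V₁) (hP₁ : 0 < P₁)
    (h₁ : P₁ = g * V₁ * (V₁ - V₂)) (h₂ : P₂ = g * V₂ * (V₂ - V₁)) :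
    V₁ = P₁ / √(g * (P₁ + P₂)) ∧ V₂ = -P₂ / √(g * (P₁ + P₂)) := by
  have hr := mul_sub_eq_sqrt_of_twoPort hV₁ hP₁ h₁ h₂
  have hV₁r : V₁ * √(g * (P₁ + P₂)) = P₁ := by rw [← hr]; linear_combination -h₁
  have hV₂r : V₂ * √(g * (P₁ + P₂)) = -P₂ := by rw [← hr]; linear_combination h₂
  have hr₀ : √(g * (P₁ + P₂)) ≠ 0 := right_ne_zero_of_mul (hV₁r ▸ hP₁.ne')
  exact ⟨(eq_div_iff hr₀).2 hV₁r, (eq_div_iff hr₀).2 hV₂r⟩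

lemma twoPort_of_voltages_eq_div_sqrt (hg : 0 < g) (hP : 0 < P₁ + P₂)
    (h₁ : V₁ = P₁ / √(g * (P₁ + P₂))) (h₂ : V₂ = -P₂ / √(g * (P₁ + P₂))) :
    P₁ = g * V₁ * (V₁ - V₂) ∧ P₂ = g * V₂ * (V₂ - V₁) := by
  have hgP : 0 < g * (P₁ + P₂) := mul_pos hg hP
  have hr₀ : √(g * (P₁ + P₂)) ≠ 0 := (Real.sqrt_pos.2 hgP).ne'
  have hr2 : √(g * (P₁ + P₂)) ^ 2 = g * (P₁ + P₂) := Real.sq_sqrt hgP.le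
  subst h₁ h₂
  constructor
  · field_simp
    linear_combination P₁ * hr2
  · field_simp
    linear_combination P₂ * hr2

end TwoPort

theorem two_port_unique_positive_operating_point_general
    (g P₁ P₂ : ℝ) (hg : 0 < g)
    (hpos : 0 < P₁ + P₂) (hlt : P₁ + P₂ < P₁ - P₂)
    (V₀ x : ℝ)
    (hV₀ : V₀ = (P₁ - P₂) / (2 * Real.sqrt (g * (P₁ + P₂))))
    (hx : x = (P₁ + P₂) / (P₁ - P₂)) :
    ∀ V₁ V₂ : ℝ,
      (0 < V₁ ∧ 0 < V₂ ∧ P₁ = g * V₁ * (V₁ - V₂) ∧ P₂ = g * V₂ * (V₂ - V₁)) ↔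
      (V₁ = V₀ * (1 + x) ∧ V₂ = V₀ * (1 - x)) := by
  intro V₁ V₂
  have hP₂ : P₂ < 0 := by linarith
  have hP₁ : 0 < P₁ := by linarith
  have hr : 0 < √(g * (P₁ + P₂)) := Real.sqrt_pos.2 (mul_pos hg hpos)
  have hne : P₁ ≠ P₂ := by linarith
  subst hV₀ hx
  rw [sub_div_two_mul_mul_one_add hne, sub_div_two_mul_mul_one_sub hne]
  constructor
  · rintro ⟨hV₁, -, h₁, h₂⟩
    exact voltages_eq_div_sqrt_of_twoPort hV₁ hP₁ h₁ h₂
  · rintro ⟨h₁, h₂⟩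
    refine ⟨?_, ?_, twoPort_of_voltages_eq_div_sqrt hg hpos h₁ h₂⟩
    · rw [h₁]; exact div_pos hP₁ hr
    · rw [h₂]; exact div_pos (neg_pos.2 hP₂) hr

/-- Under `P₁ > P₂` and `0 < P₁ + P₂ < P₁ - P₂`, the two-port circuit has a
unique solution with positive voltages, namely `V₁ = V₀(1+x)`, `V₂ = V₀(1-x)` with
`V₀ = (P₁-P₂)/(2√(g(P₁+P₂)))` and `x = (P₁+P₂)/(P₁-P₂)`. -/
theorem two_port_unique_positive_operating_point
    (g P₁ P₂ : ℝ) (hg : 0 < g)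
    (h12 : P₂ < P₁)
    (hpos : 0 < P₁ + P₂) (hlt : P₁ + P₂ < P₁ - P₂)
    (V₀ x : ℝ)
    (hV₀ : V₀ = (P₁ - P₂) / (2 * Real.sqrt (g * (P₁ + P₂))))
    (hx : x = (P₁ + P₂) / (P₁ - P₂)) :
    ∀ V₁ V₂ : ℝ,
      (0 < V₁ ∧ 0 < V₂ ∧ P₁ = g * V₁ * (V₁ - V₂) ∧ P₂ = g * V₂ * (V₂ - V₁)) ↔
      (V₁ = V₀ * (1 + x) ∧ V₂ = V₀ * (1 - x)) :=
  two_port_unique_positive_operating_point_general g P₁ P₂ hg hpos hlt V₀ x hV₀ hx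
end

section
/- Let n ≥ 2, let G be an n×n real symmetric positive semidefinite matrix with G·𝟙 = 0, and let 0 < λ₂ ≤ λₙ be such that λ₂‖x‖₂² ≤ xᵀGx ≤ λₙ‖x‖₂² for all x ∈ ℝ^n with 𝟙ᵀx = 0. Let P ∈ ℝ^n, set p := 𝟙ᵀP and P⊥ := P - (p/n)𝟙, and define Δ := (p/(‖P⊥‖₂ - p))·(λₙ/λ₂). Assume 0 < Δ < 1/2 (which entails p > 0 and ‖P⊥‖₂ > p). Define V_min := ((1-Δ)/Δ)·√(p/λ₂) > 0 and x_max := Δ/(1-Δ) < 1. Then every solution of P = diag(V)·G·V of the form V = V₀(𝟙 + x) with 𝟙ᵀx = 0 satisfies |V₀| ≥ V_min and ‖x‖_∞ ≤ x_max. -/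
/-!
Write `g = G x`. Since `G 𝟙 = 0`, a solution satisfies `P i = V₀² (1 + x i) g i`, and since also
`𝟙ᵀ g = 0` (symmetry of `G`) the losses are `p = V₀² xᵀGx ≥ λ₂ V₀² ‖x‖²`. Cauchy–Schwarz for the
form of `G`, applied to `x, g ∈ 𝟙^⊥`, gives `‖g‖ ≤ λₙ ‖x‖`, hence
`‖P⊥‖ ≤ ‖P‖ ≤ V₀² (1 + ‖x‖) λₙ ‖x‖`. Through the definition of `Δ` this becomes
`p ≤ Δ λ₂ V₀² (1 + ‖x‖) ‖x‖`; together with the lower bound on `p` it yields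
`‖x‖ ≤ Δ (1 + ‖x‖)`, i.e. `‖x‖₂ ≤ x_max`, and then `|V₀| ‖x‖ ≤ √(p / λ₂)` bounds `|V₀|` from below.
-/

open Matrix

section Vectors

variable {ι : Type*} [Fintype ι]

theorem abs_le_sqrt_sum_sq (x : ι → ℝ) (i : ι) : |x i| ≤ √(∑ j, x j ^ 2) :=
  Real.abs_le_sqrt <| Finset.single_le_sum (f := fun j => x j ^ 2)
    (fun j _ => sq_nonneg (x j)) (Finset.mem_univ i)

theorem sum_sub_mean_sq_le_sum_sq (f : ι → ℝ) :
    ∑ i, (f i - (∑ j, f j) / Fintype.card ι) ^ 2 ≤ ∑ i, f i ^ 2 := by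
  set N : ℝ := (Fintype.card ι : ℝ)
  set m := (∑ j, f j) / N
  have hsum : ∑ j, f j = N * m := by
    rcases isEmpty_or_nonempty ι with hι | hι
    · simp [N]
    · have : N ≠ 0 := by positivity
      simp only [m]
      field_simp
  have hexpand : ∑ i, (f i - m) ^ 2 = ∑ i, f i ^ 2 - N * m ^ 2 := by
    simp only [sub_sq, Finset.sum_add_distrib, Finset.sum_sub_distrib, ← Finset.sum_mul,
      ← Finset.mul_sum, hsum, Finset.sum_const, Finset.card_univ, nsmul_eq_mul, N]
    ring
  rw [hexpand]
  have : 0 ≤ N * m ^ 2 := by positivity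
  linarith

theorem sum_mul_sq_le (a b : ι → ℝ) {M : ℝ} (ha : ∀ i, |a i| ≤ M) :
    ∑ i, (a i * b i) ^ 2 ≤ M ^ 2 * ∑ i, b i ^ 2 := by
  rw [Finset.mul_sum]
  refine Finset.sum_le_sum fun i _ => ?_
  rw [mul_pow]
  exact mul_le_mul_of_nonneg_right (sq_le_sq' (neg_le_of_abs_le (ha i)) (le_of_abs_le (ha i)))
    (sq_nonneg _)

end Vectors

namespace Matrix

variable {ι : Type*} [Fintype ι] {G : Matrix ι ι ℝ}

theorem PosSemidef.dotProduct_mulVec_sq_le (hG : G.PosSemidef) (u v : ι → ℝ) :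
    (u ⬝ᵥ G *ᵥ v) ^ 2 ≤ (u ⬝ᵥ G *ᵥ u) * (v ⬝ᵥ G *ᵥ v) := by
  classical
  simpa only [toBilin'_apply'] using (toBilin' G).apply_sq_le_of_symm
    (fun w => by simpa [toBilin'_apply'] using hG.dotProduct_mulVec_nonneg w)
    (LinearMap.BilinForm.isSymm_iff.1 <|
      isSymm_toBilin'_iff_isSymm.2 (isHermitian_iff_isSymm.1 hG.isHermitian)) u v

theorem IsSymm.sum_mulVec_eq_zero (hG : G.IsSymm) (hG1 : G *ᵥ (fun _ => (1 : ℝ)) = 0)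
    (y : ι → ℝ) : ∑ i, (G *ᵥ y) i = 0 := by
  have h : (fun _ => (1 : ℝ)) ᵥ* G = 0 := by rw [← mulVec_transpose, hG.eq, hG1]
  calc ∑ i, (G *ᵥ y) i = (fun _ => (1 : ℝ)) ⬝ᵥ G *ᵥ y := by simp [dotProduct]
    _ = 0 := by rw [dotProduct_mulVec, h, zero_dotProduct]

theorem PosSemidef.sum_mulVec_sq_le (hG : G.PosSemidef) {c : ℝ} {x : ι → ℝ}
    (hx : x ⬝ᵥ G *ᵥ x ≤ c * ∑ i, x i ^ 2)
    (hGx : (G *ᵥ x) ⬝ᵥ G *ᵥ (G *ᵥ x) ≤ c * ∑ i, (G *ᵥ x) i ^ 2) :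
    ∑ i, (G *ᵥ x) i ^ 2 ≤ c ^ 2 * ∑ i, x i ^ 2 := by
  set g := G *ᵥ x
  set S := ∑ i, g i ^ 2
  have hS : S = g ⬝ᵥ g := by simp only [S, dotProduct, sq]
  rcases (Finset.sum_nonneg fun i _ => sq_nonneg (g i) : 0 ≤ S).eq_or_lt with h0 | hpos
  · rw [show S = 0 from h0.symm]; positivity
  have hcS : 0 ≤ c * S := (hG.dotProduct_mulVec_nonneg g).trans hGx
  refine le_of_mul_le_mul_right ?_ hpos
  calc S * S = (g ⬝ᵥ G *ᵥ x) ^ 2 := by rw [← hS, sq]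
    _ ≤ (g ⬝ᵥ G *ᵥ g) * (x ⬝ᵥ G *ᵥ x) := hG.dotProduct_mulVec_sq_le g x
    _ ≤ (c * S) * (c * ∑ i, x i ^ 2) :=
      mul_le_mul hGx hx (hG.dotProduct_mulVec_nonneg x) hcS
    _ = c ^ 2 * (∑ i, x i ^ 2) * S := by ring

end Matrix

section

variable {ι : Type*} [Fintype ι]

def powerInjection (G : Matrix ι ι ℝ) (V : ι → ℝ) : ι → ℝ := V * G *ᵥ V

variable {G : Matrix ι ι ℝ}

theorem powerInjection_smul_one_add_apply (hG1 : G *ᵥ (fun _ => (1 : ℝ)) = 0) (V₀ : ℝ)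
    (x : ι → ℝ) (i : ι) :
    powerInjection G (V₀ • ((fun _ => (1 : ℝ)) + x)) i = V₀ ^ 2 * (1 + x i) * (G *ᵥ x) i := by
  simp only [powerInjection, mulVec_smul, mulVec_add, hG1, zero_add, Pi.mul_apply,
    Pi.smul_apply, Pi.add_apply, smul_eq_mul]
  ring

theorem sum_powerInjection_smul_one_add (hGs : G.IsSymm) (hG1 : G *ᵥ (fun _ => (1 : ℝ)) = 0)
    (V₀ : ℝ) (x : ι → ℝ) :
    ∑ i, powerInjection G (V₀ • ((fun _ => (1 : ℝ)) + x)) i = V₀ ^ 2 * (x ⬝ᵥ G *ᵥ x) := by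
  have hg := hGs.sum_mulVec_eq_zero hG1 x
  simp only [powerInjection_smul_one_add_apply hG1, mul_assoc, ← Finset.mul_sum, add_mul,
    one_mul, Finset.sum_add_distrib, hg, zero_add, dotProduct]

theorem sum_powerInjection_smul_one_add_sq_le (hG : G.PosSemidef)
    (hG1 : G *ᵥ (fun _ => (1 : ℝ)) = 0) {c : ℝ} {x : ι → ℝ}
    (hx : x ⬝ᵥ G *ᵥ x ≤ c * ∑ i, x i ^ 2)
    (hGx : (G *ᵥ x) ⬝ᵥ G *ᵥ (G *ᵥ x) ≤ c * ∑ i, (G *ᵥ x) i ^ 2) (V₀ : ℝ) :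
    ∑ i, powerInjection G (V₀ • ((fun _ => (1 : ℝ)) + x)) i ^ 2 ≤
      (V₀ ^ 2 * (1 + √(∑ i, x i ^ 2)) * (c * √(∑ i, x i ^ 2))) ^ 2 := by
  have hs2 : √(∑ i, x i ^ 2) ^ 2 = ∑ i, x i ^ 2 :=
    Real.sq_sqrt (Finset.sum_nonneg fun i _ => sq_nonneg _)
  calc ∑ i, powerInjection G (V₀ • ((fun _ => (1 : ℝ)) + x)) i ^ 2
      = ∑ i, (V₀ ^ 2 * (1 + x i) * (G *ᵥ x) i) ^ 2 := by
        simp only [powerInjection_smul_one_add_apply hG1]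
    _ ≤ (V₀ ^ 2 * (1 + √(∑ i, x i ^ 2))) ^ 2 * ∑ i, (G *ᵥ x) i ^ 2 := by
        refine sum_mul_sq_le _ _ fun i => ?_
        rw [abs_mul, abs_sq]
        gcongr
        exact (abs_add_le _ _).trans (by simpa using abs_le_sqrt_sum_sq x i)
    _ ≤ (V₀ ^ 2 * (1 + √(∑ i, x i ^ 2))) ^ 2 * (c ^ 2 * √(∑ i, x i ^ 2) ^ 2) := by
        rw [hs2]; gcongr; exact hG.sum_mulVec_sq_le hx hGx
    _ = _ := by ring

end

section

variable {p lam2 lamn Δ K V₀ s : ℝ}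

theorem loss_le_of_norm_perp_le (hlam2 : 0 < lam2) (hle : lam2 ≤ lamn)
    (hΔ : Δ = p / (K - p) * (lamn / lam2)) (hΔpos : 0 < Δ) (hp : 0 ≤ p)
    (hK : K ≤ V₀ ^ 2 * (1 + s) * (lamn * s)) :
    0 < p ∧ p ≤ Δ * lam2 * (V₀ ^ 2 * (1 + s) * s) := by
  have hlamn : 0 < lamn := hlam2.trans_le hle
  have hppos : 0 < p := hp.lt_of_ne fun h => by simp [← h] at hΔ; linarith
  have hKp : 0 < K - p := by
    have : 0 < p / (K - p) := pos_of_mul_pos_left (hΔ ▸ hΔpos) (by positivity)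
    exact (div_pos_iff_of_pos_left hppos).1 this
  have hΔK : Δ * lam2 * (K - p) = p * lamn := by rw [hΔ]; field_simp
  refine ⟨hppos, le_of_mul_le_mul_right ?_ hlamn⟩
  calc p * lamn = Δ * lam2 * (K - p) := hΔK.symm
    _ ≤ Δ * lam2 * K := by gcongr; linarith
    _ ≤ Δ * lam2 * (V₀ ^ 2 * (1 + s) * (lamn * s)) := by gcongr
    _ = Δ * lam2 * (V₀ ^ 2 * (1 + s) * s) * lamn := by ring

theorem le_div_one_sub_of_loss_le (hlam2 : 0 < lam2) (hs : 0 ≤ s) (hΔ1 : Δ < 1) (hp : 0 < p)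
    (hlow : lam2 * (V₀ ^ 2 * s ^ 2) ≤ p) (hup : p ≤ Δ * lam2 * (V₀ ^ 2 * (1 + s) * s)) :
    s ≤ Δ / (1 - Δ) := by
  have hV : V₀ ≠ 0 := by rintro rfl; simp at hup; linarith
  have hspos : 0 < s := hs.lt_of_ne <| by rintro rfl; simp at hup; linarith
  have : s ≤ Δ * (1 + s) := by
    refine le_of_mul_le_mul_left ?_ (by positivity : 0 < lam2 * V₀ ^ 2 * s)
    nlinarith
  rw [le_div_iff₀ (by linarith)]
  linarith

theorem le_abs_of_loss_le (hlam2 : 0 < lam2) (hs : 0 ≤ s) (hΔpos : 0 < Δ) (hΔ1 : Δ < 1)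
    (hlow : lam2 * (V₀ ^ 2 * s ^ 2) ≤ p) (hup : p ≤ Δ * lam2 * (V₀ ^ 2 * (1 + s) * s))
    (hsx : s ≤ Δ / (1 - Δ)) :
    (1 - Δ) / Δ * √(p / lam2) ≤ |V₀| := by
  set t := √(p / lam2)
  have hp : 0 ≤ p := (by positivity : 0 ≤ lam2 * (V₀ ^ 2 * s ^ 2)).trans hlow
  have ht : p = lam2 * t ^ 2 := by
    rw [Real.sq_sqrt (by positivity)]; field_simp
  have hVs : |V₀| * s ≤ t := by
    refine Real.le_sqrt_of_sq_le ?_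
    rw [le_div_iff₀ hlam2, mul_pow, sq_abs]; linarith
  have h1s : (1 + s) * (1 - Δ) ≤ 1 := by
    rw [le_div_iff₀ (by linarith)] at hsx; linarith
  have hscaled : lam2 * t * ((1 - Δ) * t) ≤ lam2 * t * (Δ * |V₀|) := by
    calc lam2 * t * ((1 - Δ) * t) = p * (1 - Δ) := by rw [ht]; ring
      _ ≤ Δ * lam2 * (|V₀| * (1 + s) * (|V₀| * s)) * (1 - Δ) := by
        gcongr
        calc p ≤ _ := hup
          _ = _ := by rw [← sq_abs V₀]; ring
      _ ≤ Δ * lam2 * (|V₀| * (1 + s) * t) * (1 - Δ) := by gcongr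
      _ = Δ * lam2 * |V₀| * t * ((1 + s) * (1 - Δ)) := by ring
      _ ≤ Δ * lam2 * |V₀| * t * 1 := by gcongr
      _ = lam2 * t * (Δ * |V₀|) := by ring
  rw [div_mul_eq_mul_div, div_le_iff₀ hΔpos]
  rcases (Real.sqrt_nonneg (p / lam2)).eq_or_lt with h0 | htpos
  · rw [show t = 0 from h0.symm, mul_zero]; positivity
  · linarith [le_of_mul_le_mul_left hscaled (by positivity : 0 < lam2 * t)]

end

theorem operating_regions_I_general
    (n : ℕ)
    (G : Matrix (Fin n) (Fin n) ℝ)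
    (hG : G.PosSemidef)
    (hG1 : G.mulVec (fun _ => (1 : ℝ)) = 0)
    (lam2 lamn : ℝ) (hlam2 : 0 < lam2) (hle : lam2 ≤ lamn)
    (hray : ∀ y : Fin n → ℝ, ∑ i, y i = 0 →
      lam2 * (∑ i, y i ^ 2) ≤ y ⬝ᵥ G.mulVec y ∧
      y ⬝ᵥ G.mulVec y ≤ lamn * (∑ i, y i ^ 2))
    (P : Fin n → ℝ) (p : ℝ) (hp : p = ∑ i, P i)
    (Pperp : Fin n → ℝ) (hPperp : Pperp = P - (p / n) • (fun _ => (1 : ℝ)))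
    (Δ : ℝ) (hΔdef : Δ = p / (Real.sqrt (∑ i, Pperp i ^ 2) - p) * (lamn / lam2))
    (hΔpos : 0 < Δ) (hΔlt : Δ < 1 / 2)
    (Vmin xmax : ℝ)
    (hVmin : Vmin = (1 - Δ) / Δ * Real.sqrt (p / lam2))
    (hxmax : xmax = Δ / (1 - Δ)) :
    ∀ (V₀ : ℝ) (x : Fin n → ℝ), ∑ i, x i = 0 →
      P = (V₀ • ((fun _ => (1 : ℝ)) + x)) * G.mulVec (V₀ • ((fun _ => (1 : ℝ)) + x)) →
      Vmin ≤ |V₀| ∧ ∀ i, |x i| ≤ xmax := by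
  intro V₀ x hx hsol
  change P = powerInjection G _ at hsol
  have hGs : G.IsSymm := isHermitian_iff_isSymm.1 hG.isHermitian
  set s := √(∑ i, x i ^ 2)
  have hs2 : s ^ 2 = ∑ i, x i ^ 2 := Real.sq_sqrt (Finset.sum_nonneg fun i _ => sq_nonneg _)
  obtain ⟨hxlow, hxup⟩ := hray x hx
  have hloss : p = V₀ ^ 2 * (x ⬝ᵥ G *ᵥ x) := by
    rw [hp, hsol, sum_powerInjection_smul_one_add hGs hG1]
  have hlow : lam2 * (V₀ ^ 2 * s ^ 2) ≤ p := by
    rw [hloss, hs2, mul_left_comm]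
    exact mul_le_mul_of_nonneg_left hxlow (sq_nonneg V₀)
  have hK : √(∑ i, Pperp i ^ 2) ≤ V₀ ^ 2 * (1 + s) * (lamn * s) := by
    have hlamn : 0 ≤ lamn := hlam2.le.trans hle
    calc √(∑ i, Pperp i ^ 2) ≤ √(∑ i, P i ^ 2) :=
          Real.sqrt_le_sqrt (by simpa [hPperp, hp] using sum_sub_mean_sq_le_sum_sq P)
      _ ≤ V₀ ^ 2 * (1 + s) * (lamn * s) := Real.sqrt_le_iff.2 ⟨by positivity, hsol ▸
          sum_powerInjection_smul_one_add_sq_le hG hG1 hxup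
            (hray _ (hGs.sum_mulVec_eq_zero hG1 x)).2 V₀⟩
  obtain ⟨hppos, hup⟩ := loss_le_of_norm_perp_le hlam2 hle hΔdef hΔpos
    ((by positivity : (0 : ℝ) ≤ _).trans hlow) hK
  have hsx := le_div_one_sub_of_loss_le hlam2 (Real.sqrt_nonneg _) (by linarith) hppos hlow hup
  refine ⟨hVmin ▸ le_abs_of_loss_le hlam2 (Real.sqrt_nonneg _) hΔpos (by linarith) hlow hup hsx,
    fun i => hxmax ▸ (abs_le_sqrt_sum_sq x i).trans hsx⟩

/-- Operating Regions I: Assume `G` is symmetric PSD with `G𝟙 = 0` and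
Rayleigh bounds `λ₂‖x‖₂² ≤ xᵀGx ≤ λₙ‖x‖₂²` on `𝟙^⊥`, `0 < λ₂ ≤ λₙ`. With `p = 𝟙ᵀP`,
`P⊥ = P - (p/n)𝟙`, `Δ = (p/(‖P⊥‖₂ - p))·(λₙ/λ₂) ∈ (0, 1/2)`,
`V_min = ((1-Δ)/Δ)√(p/λ₂)` and `x_max = Δ/(1-Δ)`, every solution of
`P = diag(V)GV` of the form `V = V₀(𝟙 + x)` with `𝟙ᵀx = 0` satisfies
`|V₀| ≥ V_min` and `‖x‖_∞ ≤ x_max`. -/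
theorem operating_regions_I
    (n : ℕ) (hn : 2 ≤ n)
    (G : Matrix (Fin n) (Fin n) ℝ)
    (hG : G.PosSemidef)
    (hG1 : G.mulVec (fun _ => (1 : ℝ)) = 0)
    (lam2 lamn : ℝ) (hlam2 : 0 < lam2) (hle : lam2 ≤ lamn)
    (hray : ∀ y : Fin n → ℝ, ∑ i, y i = 0 →
      lam2 * (∑ i, y i ^ 2) ≤ y ⬝ᵥ G.mulVec y ∧
      y ⬝ᵥ G.mulVec y ≤ lamn * (∑ i, y i ^ 2))
    (P : Fin n → ℝ) (p : ℝ) (hp : p = ∑ i, P i)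
    (Pperp : Fin n → ℝ) (hPperp : Pperp = P - (p / n) • (fun _ => (1 : ℝ)))
    (Δ : ℝ) (hΔdef : Δ = p / (Real.sqrt (∑ i, Pperp i ^ 2) - p) * (lamn / lam2))
    (hΔpos : 0 < Δ) (hΔlt : Δ < 1 / 2)
    (Vmin xmax : ℝ)
    (hVmin : Vmin = (1 - Δ) / Δ * Real.sqrt (p / lam2))
    (hxmax : xmax = Δ / (1 - Δ)) :
    ∀ (V₀ : ℝ) (x : Fin n → ℝ), ∑ i, x i = 0 →
      P = (V₀ • ((fun _ => (1 : ℝ)) + x)) * G.mulVec (V₀ • ((fun _ => (1 : ℝ)) + x)) →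
      Vmin ≤ |V₀| ∧ ∀ i, |x i| ≤ xmax :=
  operating_regions_I_general n G hG hG1 lam2 lamn hlam2 hle hray P p hp Pperp hPperp Δ hΔdef hΔpos
    hΔlt Vmin xmax hVmin hxmax
end

section
/- Let n ≥ 1, let 0 < λ₂ ≤ λₙ, p > 0, V₀ > 0, and let r ≥ 0 and Q ≥ 0 be real numbers such that Q ≤ V₀²·λₙ·(r + r²) + p/√n and r ≤ (1/V₀)·√(p/λ₂). Then V₀ ≥ √(p/λ₂)·(λ₂/λₙ)·(Q/p - λₙ/λ₂ - 1/√n), and hence also V₀ ≥ √(p/λ₂)·((λ₂/λₙ)·(Q/p - 1) - 1). -/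
/-!
Put `s = √(p/λ₂)`, so that `λ₂ s² = p`. The hypothesis on `r` says `V₀ r ≤ s`, hence
`V₀²(r + r²) = V₀ (V₀ r) + (V₀ r)² ≤ V₀ s + s²` and `Q ≤ λₙ V₀ s + λₙ p/λ₂ + p/√n`.
Dividing by `λₙ s` isolates `V₀` and gives the first bound; the second follows
from `1/√n ≤ 1`.
-/

open Real

theorem Real.one_div_sqrt_natCast_le_one (n : ℕ) : 1 / √(n : ℝ) ≤ 1 := by
  rcases n.eq_zero_or_pos with rfl | hn
  · simp
  · exact div_le_one_of_le₀ (one_le_sqrt.mpr (by exact_mod_cast hn)) (sqrt_nonneg _)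

theorem sq_mul_add_sq_le_of_mul_le {V r s : ℝ} (hV : 0 ≤ V) (hr : 0 ≤ r) (hrs : V * r ≤ s) :
    V ^ 2 * (r + r ^ 2) ≤ V * s + s ^ 2 :=
  calc V ^ 2 * (r + r ^ 2) = V * (V * r) + (V * r) ^ 2 := by ring
    _ ≤ V * s + s ^ 2 := by gcongr

theorem mul_div_mul_sub_sub_le_of_le {lam2 lamn s V Q c : ℝ} (hlam2 : 0 < lam2) (hlamn : 0 < lamn)
    (hs : 0 < s) (hQ : Q ≤ lamn * (V * s + s ^ 2) + c) :
    s * (lam2 / lamn) * (Q / (s ^ 2 * lam2) - lamn / lam2 - c / (s ^ 2 * lam2)) ≤ V :=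
  calc s * (lam2 / lamn) * (Q / (s ^ 2 * lam2) - lamn / lam2 - c / (s ^ 2 * lam2))
        = (Q - lamn * s ^ 2 - c) / (lamn * s) := by field_simp
    _ ≤ V := by rw [div_le_iff₀ (by positivity)]; linarith

theorem mul_mul_sub_one_sub_one_le {s a b x e : ℝ} (hs : 0 ≤ s) (ha : 0 ≤ a) (hab : a * b = 1)
    (he : e ≤ 1) : s * (a * (x - 1) - 1) ≤ s * a * (x - b - e) := by
  linear_combination mul_nonneg (mul_nonneg hs ha) (sub_nonneg.2 he) + s * hab

theorem voltage_lower_bound_algebra_general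
    (n : ℕ)
    (lam2 lamn p V₀ r Q : ℝ)
    (hlam2 : 0 < lam2) (hle : lam2 ≤ lamn)
    (hp : 0 < p) (hV₀ : 0 < V₀) (hr : 0 ≤ r)
    (hQb : Q ≤ V₀ ^ 2 * lamn * (r + r ^ 2) + p / Real.sqrt n)
    (hrb : r ≤ (1 / V₀) * Real.sqrt (p / lam2)) :
    Real.sqrt (p / lam2) * (lam2 / lamn) * (Q / p - lamn / lam2 - 1 / Real.sqrt n) ≤ V₀ ∧
    Real.sqrt (p / lam2) * ((lam2 / lamn) * (Q / p - 1) - 1) ≤ V₀ := by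
  have hlamn : 0 < lamn := hlam2.trans_le hle
  set s := √(p / lam2)
  have hs : 0 < s := sqrt_pos.mpr (by positivity)
  have hsp : s ^ 2 * lam2 = p := by rw [sq_sqrt (by positivity)]; field_simp
  have hVr : V₀ * r ≤ s := by rwa [one_div_mul_eq_div, le_div_iff₀' hV₀] at hrb
  have hQs : Q ≤ lamn * (V₀ * s + s ^ 2) + p / √n :=
    calc Q ≤ lamn * (V₀ ^ 2 * (r + r ^ 2)) + p / √n := by linarith
      _ ≤ lamn * (V₀ * s + s ^ 2) + p / √n := by
        gcongr; exact sq_mul_add_sq_le_of_mul_le hV₀.le hr hVr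
  have hfirst := mul_div_mul_sub_sub_le_of_le hlam2 hlamn hs hQs
  rw [hsp, div_div_cancel_left' hp.ne', ← one_div] at hfirst
  refine ⟨hfirst, le_trans ?_ hfirst⟩
  exact mul_mul_sub_one_sub_one_le hs.le (by positivity) (by field_simp)
    (one_div_sqrt_natCast_le_one n)

/-- Algebraic core of the lower bound on the nominal voltage level:
if `Q ≤ V₀²λₙ(r + r²) + p/√n` and `r ≤ (1/V₀)√(p/λ₂)` with `0 < λ₂ ≤ λₙ`, `p > 0`,
`V₀ > 0`, `r ≥ 0`, `Q ≥ 0`, then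
`V₀ ≥ √(p/λ₂)·(λ₂/λₙ)·(Q/p - λₙ/λ₂ - 1/√n)` and hence
`V₀ ≥ √(p/λ₂)·((λ₂/λₙ)(Q/p - 1) - 1)`. -/
theorem voltage_lower_bound_algebra
    (n : ℕ) (hn : 1 ≤ n)
    (lam2 lamn p V₀ r Q : ℝ)
    (hlam2 : 0 < lam2) (hle : lam2 ≤ lamn)
    (hp : 0 < p) (hV₀ : 0 < V₀) (hr : 0 ≤ r) (hQ : 0 ≤ Q)
    (hQb : Q ≤ V₀ ^ 2 * lamn * (r + r ^ 2) + p / Real.sqrt n)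
    (hrb : r ≤ (1 / V₀) * Real.sqrt (p / lam2)) :
    Real.sqrt (p / lam2) * (lam2 / lamn) * (Q / p - lamn / lam2 - 1 / Real.sqrt n) ≤ V₀ ∧
    Real.sqrt (p / lam2) * ((lam2 / lamn) * (Q / p - 1) - 1) ≤ V₀ :=
  voltage_lower_bound_algebra_general n lam2 lamn p V₀ r Q hlam2 hle hp hV₀ hr hQb hrb
end
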